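/- arXiv:1508.05363 — 2 statements merged into one kernel-verified Lean document; each statement's English description precedes it below -/
import Mathlib

section
/- With the Arnoux–Yoccoz interval exchange IE of genus g ≥ 2: for every s ∈ [0, α), if IE(s) ≥ α then IE(IE(s)) < α. Consequently the first return map of IE to the interval [0, α) is given by IE(s) when IE(s) < α and by IE(IE(s)) otherwise. -/
/-!
`I₁` maps each interval `J_k` into itself, and `J_1 = [0, α)`, so `I₁` preserves `[α, 1)`.
The relation `α + ⋯ + α^g = 1` gives `2α = 1 + α^(g+1) > 1`, so on `[α, 1)` the rotation `I₂`
is `t ↦ t - 1/2`, which lands in `[0, 1/2) ⊆ [0, α)`. Hence `IE` sends `[α, 1)` into `[0, α)`,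
and every orbit returns to `[0, α)` after one or two steps.
-/

/-- The partial sum `α + α² + ⋯ + α^k`.  The interval `J_k` of the Arnoux–Yoccoz
partition of `[0,1)` is `[aySum α (k-1), aySum α k)`. -/
noncomputable def aySum (α : ℝ) (k : ℕ) : ℝ := ∑ j ∈ Finset.Icc 1 k, α ^ j

/-- The index `k ≥ 1` such that `t` lies in `J_k = [aySum α (k-1), aySum α k)`
(the least `k` with `t < aySum α k`). -/
noncomputable def ayIdx (α : ℝ) (t : ℝ) : ℕ := sInf {k : ℕ | t < aySum α k}

/-- The first involution `I₁`, rotating each interval `J_k` halfway around: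
`I₁ t = t + α^k/2` if this value lies in `J_k`, and `t - α^k/2` otherwise,
where `k` is the index with `t ∈ J_k`. -/
noncomputable def ayI1 (α : ℝ) (t : ℝ) : ℝ :=
  if t + α ^ ayIdx α t / 2 ∈ Set.Ico (aySum α (ayIdx α t - 1)) (aySum α (ayIdx α t)) then
    t + α ^ ayIdx α t / 2
  else
    t - α ^ ayIdx α t / 2

/-- The second involution `I₂ : t ↦ t + 1/2 (mod 1)`, rotating `[0,1)` halfway around. -/
noncomputable def ayI2 (t : ℝ) : ℝ := Int.fract (t + 1 / 2)

/-- The Arnoux–Yoccoz interval exchange transformation `IE = I₂ ∘ I₁` on `[0,1)`. -/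
noncomputable def ayIE (α : ℝ) (t : ℝ) : ℝ := ayI2 (ayI1 α t)


/-- The first return time of `s` to the interval `[0, α)` under `IE`. -/
noncomputable def ayReturnTime (α : ℝ) (s : ℝ) : ℕ :=
  sInf {n : ℕ | 0 < n ∧ (ayIE α)^[n] s ∈ Set.Ico (0 : ℝ) α}

section

variable {α : ℝ}

lemma aySum_zero : aySum α 0 = 0 := by simp [aySum]

lemma aySum_one : aySum α 1 = α := by simp [aySum]

lemma aySum_succ (k : ℕ) : aySum α (k + 1) = aySum α k + α ^ (k + 1) := by
  simp only [aySum, ← Finset.Ico_add_one_right_eq_Icc]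
  exact Finset.sum_Ico_succ_top (by omega) _

lemma aySum_monotone (hα0 : 0 < α) : Monotone (aySum α) := fun _ _ h =>
  Finset.sum_le_sum_of_subset_of_nonneg (Finset.Icc_subset_Icc_right h)
    fun i _ _ => (pow_pos hα0 i).le

lemma lt_aySum_ayIdx {t : ℝ} {n : ℕ} (hn : t < aySum α n) : t < aySum α (ayIdx α t) :=
  Nat.sInf_mem (s := {k | t < aySum α k}) ⟨n, hn⟩

lemma ayIdx_le {t : ℝ} {n : ℕ} (hn : t < aySum α n) : ayIdx α t ≤ n := Nat.sInf_le hn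

lemma aySum_ayIdx_pred_le {t : ℝ} (ht : 0 ≤ t) : aySum α (ayIdx α t - 1) ≤ t := by
  rcases Nat.eq_zero_or_pos (ayIdx α t) with h0 | hpos
  · rw [h0, Nat.zero_sub, aySum_zero]
    exact ht
  · exact not_lt.1 (Nat.notMem_of_lt_sInf (Nat.sub_lt hpos one_pos))

lemma ayI1_mem_Ico {t : ℝ} {n : ℕ} (hα0 : 0 < α) (ht : 0 ≤ t) (hn : t < aySum α n) :
    ayI1 α t ∈ Set.Ico (aySum α (ayIdx α t - 1)) (aySum α (ayIdx α t)) := by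
  set k := ayIdx α t
  have hlow : aySum α (k - 1) ≤ t := aySum_ayIdx_pred_le ht
  have hhigh : t < aySum α k := lt_aySum_ayIdx hn
  have hk : 1 ≤ k := by
    by_contra hk0
    rw [show k = 0 by omega, aySum_zero] at hhigh
    linarith
  have hlen : aySum α k = aySum α (k - 1) + α ^ k := by
    simpa only [Nat.sub_add_cancel hk] using aySum_succ (α := α) (k - 1)
  have hpow : 0 < α ^ k := pow_pos hα0 k
  unfold ayI1
  split_ifs with hplus
  · exact hplus
  · have hover : aySum α k ≤ t + α ^ k / 2 := by
      by_contra h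
      exact hplus ⟨by linarith, not_le.1 h⟩
    constructor <;> linarith

lemma one_half_lt_of_sum_pow_eq_one {g : ℕ} (hα0 : 0 < α) (hα1 : α < 1)
    (hsum : ∑ k ∈ Finset.Icc 1 g, α ^ k = 1) : 1 / 2 < α := by
  have hne : α ≠ 1 := hα1.ne
  rw [← Finset.Ico_add_one_right_eq_Icc, geom_sum_Ico hne (by omega), pow_one,
    div_eq_one_iff_eq (sub_ne_zero.2 hne)] at hsum
  have : 0 < α ^ (g + 1) := pow_pos hα0 _
  linarith

/-- Since `[α, 1)` is the union of `J_2, …, J_g`, it is preserved by `I₁`. -/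
lemma ayI1_mem_Ico_of_le {g : ℕ} (hα0 : 0 < α) (hsum : ∑ k ∈ Finset.Icc 1 g, α ^ k = 1)
    {t : ℝ} (ht : α ≤ t) (ht1 : t < 1) : ayI1 α t ∈ Set.Ico α 1 := by
  have hg : t < aySum α g := by rwa [aySum, hsum]
  obtain ⟨hlow, hhigh⟩ := ayI1_mem_Ico hα0 (hα0.le.trans ht) hg
  have hk : 2 ≤ ayIdx α t := by
    by_contra h
    have := aySum_monotone hα0 (show ayIdx α t ≤ 1 by omega)
    linarith [lt_aySum_ayIdx hg, aySum_one (α := α)]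
  have hα_le : α ≤ aySum α (ayIdx α t - 1) := by
    simpa only [aySum_one] using aySum_monotone hα0 (show 1 ≤ ayIdx α t - 1 by omega)
  have hle_one : aySum α (ayIdx α t) ≤ 1 := by
    simpa only [aySum, hsum] using aySum_monotone hα0 (ayIdx_le hg)
  exact ⟨hα_le.trans hlow, hhigh.trans_le hle_one⟩

lemma ayI2_eq_sub {v : ℝ} (hv : 1 / 2 ≤ v) (hv1 : v < 3 / 2) : ayI2 v = v - 1 / 2 := by
  rw [ayI2, show v + 1 / 2 = (v - 1 / 2) + 1 by ring, Int.fract_add_one,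
    Int.fract_eq_self.2 ⟨by linarith, by linarith⟩]

lemma ayIE_lt_of_le {g : ℕ} (hα0 : 0 < α) (hα1 : α < 1)
    (hsum : ∑ k ∈ Finset.Icc 1 g, α ^ k = 1) {t : ℝ} (ht : α ≤ t) (ht1 : t < 1) :
    ayIE α t < α := by
  have hhalf := one_half_lt_of_sum_pow_eq_one hα0 hα1 hsum
  obtain ⟨hv, hv1⟩ := ayI1_mem_Ico_of_le hα0 hsum ht ht1
  rw [ayIE, ayI2_eq_sub (by linarith) (by linarith)]
  linarith

lemma ayIE_lt_one (t : ℝ) : ayIE α t < 1 := Int.fract_lt_one _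

lemma ayIE_mem_Ico_of_lt {t : ℝ} (h : ayIE α t < α) : ayIE α t ∈ Set.Ico 0 α :=
  ⟨Int.fract_nonneg _, h⟩

lemma ayReturnTime_eq_one {s : ℝ} (h : ayIE α s < α) : ayReturnTime α s = 1 := by
  have h1 : 1 ∈ {n : ℕ | 0 < n ∧ (ayIE α)^[n] s ∈ Set.Ico (0 : ℝ) α} :=
    ⟨one_pos, ayIE_mem_Ico_of_lt h⟩
  exact le_antisymm (Nat.sInf_le h1) (Nat.sInf_mem ⟨1, h1⟩).1

lemma ayReturnTime_eq_two {s : ℝ} (h1 : α ≤ ayIE α s) (h2 : ayIE α (ayIE α s) < α) :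
    ayReturnTime α s = 2 := by
  have hmem : 2 ∈ {n : ℕ | 0 < n ∧ (ayIE α)^[n] s ∈ Set.Ico (0 : ℝ) α} :=
    ⟨two_pos, ayIE_mem_Ico_of_lt h2⟩
  refine le_antisymm (Nat.sInf_le hmem) (le_csInf ⟨2, hmem⟩ fun m ⟨hm0, hm⟩ => ?_)
  by_contra hm2
  obtain rfl : m = 1 := by omega
  exact absurd hm.2 (not_lt.2 h1)

end

theorem ayIE_firstReturn_general (g : ℕ) (α : ℝ) (hα0 : 0 < α) (hα1 : α < 1)
    (hsum : ∑ k ∈ Finset.Icc 1 g, α ^ k = 1)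
    (s : ℝ) :
    (α ≤ ayIE α s → ayIE α (ayIE α s) < α) ∧
    (ayIE α)^[ayReturnTime α s] s =
      (if ayIE α s < α then ayIE α s else ayIE α (ayIE α s)) := by
  have hreturn (h : α ≤ ayIE α s) : ayIE α (ayIE α s) < α :=
    ayIE_lt_of_le hα0 hα1 hsum h (ayIE_lt_one s)
  refine ⟨hreturn, ?_⟩
  by_cases hlt : ayIE α s < α
  · rw [ayReturnTime_eq_one hlt, Function.iterate_one, if_pos hlt]
  · have hge : α ≤ ayIE α s := not_lt.1 hlt
    rw [ayReturnTime_eq_two hge (hreturn hge), if_neg hlt]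
    rfl

/-- For `s ∈ [0, α)`, if `IE(s) ≥ α` then `IE(IE(s)) < α`.  Consequently the first
return map of `IE` to `[0, α)` is given by `IE(s)` when `IE(s) < α` and by
`IE(IE(s))` otherwise. -/
theorem ayIE_firstReturn (g : ℕ) (hg : 2 ≤ g) (α : ℝ) (hα0 : 0 < α) (hα1 : α < 1)
    (hsum : ∑ k ∈ Finset.Icc 1 g, α ^ k = 1)
    (s : ℝ) (hs : s ∈ Set.Ico (0 : ℝ) α) :
    (α ≤ ayIE α s → ayIE α (ayIE α s) < α) ∧
    (ayIE α)^[ayReturnTime α s] s =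
      (if ayIE α s < α then ayIE α s else ayIE α (ayIE α s)) :=
  ayIE_firstReturn_general g α hα0 hα1 hsum s
end

section
/- Let E be a perfect field with algebraic closure Ē, let K be an intermediate field of Ē/E, and let g(X) ∈ E[X] be an irreducible polynomial. Suppose there is a prime p not dividing deg(g) such that the Galois group Aut(Ē/K) = (Ē ≃ₐ[K] Ē), with its Krull topology, is pro-p (every quotient by an open normal subgroup is a p-group). Let F = E[X]/(g(X)). Then every subfield L of F containing E which is totally-K (every E-algebra homomorphism L → Ē has image contained in K) satisfies [L : E] ≤ card{ x ∈ K : g(x) = 0 }, the number of distinct roots of g in K. -/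
/-!
Fix an `E`-embedding `τ` of `L` into `Ē`; since `L` is totally-`K`, `τ` lands in `K`, so
`Aut(Ē/K)` acts by composition on the `[F : L]` extensions of `τ` to `F`. This action factors
through a finite quotient by an open normal subgroup, which is a `p`-group, and `p ∤ [F : L]`
because `[F : L]` divides `deg g`; hence some extension `ψ` is fixed by `Aut(Ē/K)`, and as `Ē/K`
is Galois, `ψ` takes values in `K`. The root `ψ(X)` of `g` in `K` determines `ψ`, hence `τ`, so
the `[L : E]` embeddings of `L` inject into the roots of `g` in `K`.
-/

open Polynomial MulAction

def IsProPGroup (p : ℕ) (G : Type*) [Group G] [TopologicalSpace G] : Prop :=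
  ∀ (N : Subgroup G) [N.Normal], IsOpen (N : Set G) → IsPGroup p (G ⧸ N)

theorem IsProPGroup.exists_forall_smul_eq {p : ℕ} [Fact p.Prime] {G α : Type*} [Group G]
    [TopologicalSpace G] [IsTopologicalGroup G] (hpro : IsProPGroup p G)
    [MulAction G α] [Finite α]
    (hstab : ∀ a : α, IsOpen (stabilizer G a : Set G)) (hα : ¬ p ∣ Nat.card α) :
    ∃ a : α, ∀ g : G, g • a = a := by
  have hker : IsOpen ((toPermHom G α).ker : Set G) := by
    refine Subgroup.isOpen_mono (H₁ := ⨅ a : α, stabilizer G a) (fun g hg => ?_) ?_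
    · exact Equiv.ext fun a => Subgroup.mem_iInf.mp hg a
    · rw [Subgroup.coe_iInf]
      exact isOpen_iInter_of_finite hstab
  have hrange : IsPGroup p (toPermHom G α).range :=
    (hpro _ hker).of_equiv (QuotientGroup.quotientKerEquivRange _)
  obtain ⟨a, ha⟩ := hrange.nonempty_fixed_point_of_prime_not_dvd_card α hα
  exact ⟨a, fun g => ha ⟨toPermHom G α g, g, rfl⟩⟩

section GaloisAction

variable {L K F Ω : Type*} [Field L] [Field K] [Field F] [Field Ω]
  [Algebra L F] [Algebra L K] [Algebra K Ω] [Algebra L Ω] [IsScalarTower L K Ω]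

instance : MulAction (Ω ≃ₐ[K] Ω) (F →ₐ[L] Ω) where
  smul σ φ := ((σ : Ω →ₐ[K] Ω).restrictScalars L).comp φ
  one_smul _ := rfl
  mul_smul _ _ _ := rfl

theorem AlgHom.isOpen_stabilizer_algEquiv [Algebra.IsIntegral K Ω] [Algebra.FiniteType L F]
    (φ : F →ₐ[L] Ω) : IsOpen (stabilizer (Ω ≃ₐ[K] Ω) φ : Set (Ω ≃ₐ[K] Ω)) := by
  obtain ⟨s, hs⟩ := Algebra.FiniteType.out (R := L) (A := F)
  refine Subgroup.isOpen_mono (H₁ := ⨅ x ∈ s, stabilizer _ (φ x)) (fun σ hσ => ?_) ?_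
  · refine AlgHom.ext_of_adjoin_eq_top hs fun x hx => ?_
    exact Subgroup.mem_iInf.mp (Subgroup.mem_iInf.mp hσ x) hx
  · simp only [Subgroup.coe_iInf]
    exact isOpen_biInter_finset fun x _ => stabilizer_isOpen_of_isIntegral (φ x)

theorem AlgHom.exists_forall_mem_range_algebraMap [IsGalois K Ω] [IsAlgClosed Ω]
    [FiniteDimensional L F] [Algebra.IsSeparable L F] {p : ℕ} [Fact p.Prime]
    (hpro : IsProPGroup p (Ω ≃ₐ[K] Ω))
    (hdeg : ¬ p ∣ Module.finrank L F) :
    ∃ φ : F →ₐ[L] Ω, ∀ x, φ x ∈ Set.range (algebraMap K Ω) := by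
  have hcard : Nat.card (F →ₐ[L] Ω) = Module.finrank L F := by
    rw [Nat.card_eq_fintype_card, AlgHom.card]
  obtain ⟨φ, hφ⟩ := hpro.exists_forall_smul_eq
    AlgHom.isOpen_stabilizer_algEquiv (hcard ▸ hdeg)
  exact ⟨φ, fun x => (InfiniteGalois.mem_range_algebraMap_iff_fixed _).2
    fun σ => DFunLike.congr_fun (hφ σ) x⟩

end GaloisAction

theorem AlgHom.exists_extension_forall_mem_of_not_dvd_finrank {E F Ω : Type*} [Field E] [Field F]
    [Field Ω] [Algebra E F] [Algebra E Ω] [IsAlgClosed Ω] (K : IntermediateField E Ω)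
    [IsGalois K Ω] (L : IntermediateField E F) [FiniteDimensional L F] [Algebra.IsSeparable L F]
    {p : ℕ} [Fact p.Prime]
    (hpro : IsProPGroup p (Ω ≃ₐ[K] Ω))
    (hdeg : ¬ p ∣ Module.finrank L F) (τ : L →ₐ[E] Ω) (hτ : ∀ x, τ x ∈ K) :
    ∃ ψ : F →ₐ[E] Ω, (∀ x : L, ψ x = τ x) ∧ ∀ y, ψ y ∈ K := by
  let _ : Algebra L K := (τ.codRestrict K.toSubalgebra hτ).toAlgebra
  let _ : Algebra L Ω := ((algebraMap K Ω).comp (algebraMap L K)).toAlgebra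
  have : IsScalarTower L K Ω := .of_algebraMap_eq fun _ => rfl
  have : IsScalarTower E L Ω := .of_algebraMap_eq fun e => (τ.commutes e).symm
  obtain ⟨φ, hφ⟩ := AlgHom.exists_forall_mem_range_algebraMap (K := K) hpro hdeg
  refine ⟨φ.restrictScalars E, fun x => φ.commutes x, fun y => ?_⟩
  obtain ⟨k, hk⟩ := hφ y
  exact hk ▸ k.2

theorem AdjoinRoot.finrank_le_ncard_roots_of_forall_exists_extension {E Ω : Type*} [Field E]
    [Field Ω] [Algebra E Ω] [IsAlgClosed Ω] (K : IntermediateField E Ω) {g : E[X]}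
    [Fact (Irreducible g)]
    (L : IntermediateField E (AdjoinRoot g)) [Algebra.IsSeparable E L]
    (hext : ∀ τ : L →ₐ[E] Ω, ∃ ψ : AdjoinRoot g →ₐ[E] Ω,
      (∀ x : L, ψ x = τ x) ∧ ψ (AdjoinRoot.root g) ∈ K) :
    Module.finrank E L ≤ {x : K | aeval x g = 0}.ncard := by
  have hg : g ≠ 0 := (Fact.out : Irreducible g).ne_zero
  have := (AdjoinRoot.powerBasis hg).finite
  have : Finite {x : K | aeval x g = 0} :=
    (g.rootSet_finite K).subset fun x hx => mem_rootSet.2 ⟨hg, hx⟩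
  choose ψ hψL hψK using hext
  let rootImage (τ : L →ₐ[E] Ω) : {x : K | aeval x g = 0} :=
    ⟨⟨ψ τ (AdjoinRoot.root g), hψK τ⟩, by
      apply (algebraMap K Ω).injective
      rw [map_zero, ← aeval_algebraMap_apply]
      simp [aeval_algHom_apply]⟩
  have hinj : Function.Injective rootImage := fun τ₁ τ₂ h => by
    have hψ : ψ τ₁ = ψ τ₂ := AdjoinRoot.algHom_ext (congrArg (fun x => (x.1 : Ω)) h)
    ext x
    rw [← hψL τ₁ x, ← hψL τ₂ x, hψ]
  rw [← AlgHom.card E L Ω, ← Nat.card_eq_fintype_card, ← Nat.card_coe_set_eq]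
  exact Nat.card_le_card_of_injective rootImage hinj

/-- Bound on totally-`K` subextensions of `F = E[X]/(g)` for an irreducible polynomial
`g` over a perfect field `E`: if `p` is a prime not dividing `deg g` and the Galois
group `Aut(Ē/K)` with its Krull topology is pro-`p`, then every subfield `L` of `F`
containing `E` which is totally-`K` (every `E`-algebra homomorphism `L → Ē` has image
contained in `K`) satisfies `[L : E] ≤ #{x ∈ K : g(x) = 0}`. -/
theorem totallyK_subextension_roots_bound
    {E Ebar : Type*} [Field E] [Field Ebar] [Algebra E Ebar]
    [IsAlgClosure E Ebar] [PerfectField E]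
    (K : IntermediateField E Ebar)
    (g : Polynomial E) [Fact (Irreducible g)]
    (p : ℕ) (hp : p.Prime) (hpdeg : ¬ p ∣ g.natDegree)
    (hpro : ∀ (N : Subgroup (Ebar ≃ₐ[↥K] Ebar)) [N.Normal],
      IsOpen (N : Set (Ebar ≃ₐ[↥K] Ebar)) → IsPGroup p ((Ebar ≃ₐ[↥K] Ebar) ⧸ N))
    (L : IntermediateField E (AdjoinRoot g))
    (hL : ∀ σ : ↥L →ₐ[E] Ebar, ∀ x : ↥L, σ x ∈ K) :
    Module.finrank E ↥L ≤ Set.ncard {x : ↥K | Polynomial.aeval x g = 0} := by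
  have : Fact p.Prime := ⟨hp⟩
  have hg : g ≠ 0 := (Fact.out : Irreducible g).ne_zero
  have : IsAlgClosed Ebar := IsAlgClosure.isAlgClosed E
  have : IsGalois K Ebar := IsGalois.tower_top_of_isGalois E K Ebar
  have := (AdjoinRoot.powerBasis hg).finite
  have : FiniteDimensional L (AdjoinRoot g) := .right E L _
  have : Algebra.IsSeparable E L := Algebra.isSeparable_tower_bot_of_isSeparable E L (AdjoinRoot g)
  have : Algebra.IsSeparable L (AdjoinRoot g) :=
    Algebra.isSeparable_tower_top_of_isSeparable E L (AdjoinRoot g)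
  have hdeg : ¬ p ∣ Module.finrank L (AdjoinRoot g) := fun h => hpdeg <| by
    rw [← AdjoinRoot.powerBasis_dim hg, ← PowerBasis.finrank,
      ← Module.finrank_mul_finrank E L]
    exact h.mul_left _
  refine AdjoinRoot.finrank_le_ncard_roots_of_forall_exists_extension K L fun τ => ?_
  obtain ⟨ψ, hψL, hψK⟩ :=
    AlgHom.exists_extension_forall_mem_of_not_dvd_finrank K L hpro hdeg τ (hL τ)
  exact ⟨ψ, hψL, hψK _⟩
end
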